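/- Let H₁ and H₂ be Hilbert spaces. Then the pair (H₁ × H₂, 𝕂) has the Bishop-Phelps-Bollobás point property for bilinear forms: for every ε > 0 there exists η(ε) > 0 such that whenever B: H₁ × H₂ → 𝕂 is a bounded bilinear form with ‖B‖ = 1 and (x₀, y₀) ∈ S_{H₁} × S_{H₂} satisfy |B(x₀, y₀)| > 1 − η(ε), there exists a bounded bilinear form A with ‖A‖ = 1, |A(x₀, y₀)| = 1, and ‖A − B‖ < ε. -/

import Mathlib

open RCLike

local notation "⟪" a ", " b "⟫" => inner _ a b

def BPBppBilin (𝕜 X Y Z : Type*) [RCLike 𝕜] [NormedAddCommGroup X] [NormedSpace 𝕜 X]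
    [NormedAddCommGroup Y] [NormedSpace 𝕜 Y] [NormedAddCommGroup Z] [NormedSpace 𝕜 Z] : Prop :=
  ∀ ε > (0:ℝ), ∃ η > (0:ℝ), ∀ (B : X →L[𝕜] Y →L[𝕜] Z) (x : X) (y : Y),
    ‖B‖ = 1 → ‖x‖ = 1 → ‖y‖ = 1 → 1 - η < ‖B x y‖ →
    ∃ A : X →L[𝕜] Y →L[𝕜] Z, ‖A‖ = 1 ∧ ‖A x y‖ = 1 ∧ ‖A - B‖ < ε

lemma aux_orth {𝕜 H : Type*} [RCLike 𝕜] [NormedAddCommGroup H] [InnerProductSpace 𝕜 H]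
    [CompleteSpace H] (f : H →L[𝕜] 𝕜) (y v : H) (hf : ‖f‖ ≤ 1) (hy : ‖y‖ = 1)
    (hov : (⟪y, v⟫ : 𝕜) = 0) : ‖f v‖ ^ 2 ≤ (1 - ‖f y‖ ^ 2) * ‖v‖ ^ 2 := by
  set z := (InnerProductSpace.toDual 𝕜 H).symm f with hz
  have hfz : ∀ w, f w = (⟪z, w⟫ : 𝕜) := fun w =>
    (InnerProductSpace.toDual_symm_apply).symm
  have hznorm : ‖z‖ ≤ 1 := by
    rw [hz]; rw [LinearIsometryEquiv.norm_map]; exact hf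
  set w := z - (⟪y, z⟫ : 𝕜) • y with hw
  have hyy : (⟪y, y⟫ : 𝕜) = 1 := by
    rw [inner_self_eq_norm_sq_to_K, hy]; simp
  have hyw : (⟪y, w⟫ : 𝕜) = 0 := by
    simp [hw, inner_sub_right, inner_smul_right, hyy, hy]
  have hdecomp : z = (⟪y, z⟫ : 𝕜) • y + w := by simp [hw]
  have hpyth : ‖z‖ ^ 2 = ‖(⟪y, z⟫ : 𝕜)‖ ^ 2 + ‖w‖ ^ 2 := by
    have := norm_add_sq_eq_norm_sq_add_norm_sq_of_inner_eq_zero ((⟪y, z⟫ : 𝕜) • y) w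
      (by rw [inner_smul_left]; simp [hyw])
    rw [← hdecomp] at this
    simpa [norm_smul, hy, sq] using this
  have hfy : ‖f y‖ = ‖(⟪y, z⟫ : 𝕜)‖ := by
    rw [hfz, ← inner_conj_symm, norm_conj]
  have hfv : ‖f v‖ ≤ ‖w‖ * ‖v‖ := by
    have : f v = (⟪w, v⟫ : 𝕜) := by
      rw [hfz, hdecomp, inner_add_left, inner_smul_left, hov]
      simp
    rw [this]
    exact norm_inner_le_norm w v
  have hw2 : ‖w‖ ^ 2 ≤ 1 - ‖f y‖ ^ 2 := by
    rw [hfy]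
    nlinarith [norm_nonneg z, hznorm, hpyth]
  calc ‖f v‖ ^ 2 ≤ (‖w‖ * ‖v‖) ^ 2 := by
        have := norm_nonneg (f v)
        nlinarith [hfv]
    _ ≤ (1 - ‖f y‖ ^ 2) * ‖v‖ ^ 2 := by nlinarith [sq_nonneg ‖v‖]

lemma aux_cs {a p b q n m : ℝ} (ha : 0 ≤ a) (hp : 0 ≤ p) (hb : 0 ≤ b) (hq : 0 ≤ q)
    (hn : 0 ≤ n) (hm : 0 ≤ m) (h1 : n ^ 2 = a ^ 2 + p ^ 2) (h2 : m ^ 2 = b ^ 2 + q ^ 2) :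
    p * q + a * b ≤ n * m := by
  have ht : 0 ≤ p * q + a * b := by positivity
  have htt : (p * q + a * b) ^ 2 ≤ (n * m) ^ 2 := by nlinarith [sq_nonneg (p * b - a * q)]
  exact (pow_le_pow_iff_left₀ ht (by positivity) (by norm_num)).mp htt

set_option maxHeartbeats 4000000 in
theorem stmt_11 (𝕜 H₁ H₂ : Type*) [RCLike 𝕜]
    [NormedAddCommGroup H₁] [InnerProductSpace 𝕜 H₁] [CompleteSpace H₁]
    [NormedAddCommGroup H₂] [InnerProductSpace 𝕜 H₂] [CompleteSpace H₂] :
    BPBppBilin 𝕜 H₁ H₂ 𝕜 := by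
  intro ε hε
  set η : ℝ := min (ε ^ 2 / 32) (1 / 2) with hηdef
  have hη : 0 < η := lt_min (by positivity) (by norm_num)
  have hη2 : η ≤ 1 / 2 := min_le_right _ _
  have hη1 : η ≤ ε ^ 2 / 32 := min_le_left _ _
  have hηε : η < ε / 2 := by
    rcases le_or_gt ε 1 with h | h
    · nlinarith
    · nlinarith
  have hsqrt : Real.sqrt (2 * η) ≤ ε / 4 := by
    have : (2 : ℝ) * η ≤ (ε / 4) ^ 2 := by nlinarith
    calc Real.sqrt (2 * η) ≤ Real.sqrt ((ε / 4) ^ 2) := Real.sqrt_le_sqrt this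
      _ = ε / 4 := Real.sqrt_sq (by positivity)
  refine ⟨η, hη, ?_⟩
  intro B x y hB hx hy hBxy
  set c : 𝕜 := B x y with hc
  have hc1 : ‖c‖ ≤ 1 := by
    have := B.le_opNorm₂ x y
    rw [hB, hx, hy] at this; simpa using this
  have hclb : 1 - η < ‖c‖ := hBxy
  have hcpos : 0 < ‖c‖ := by nlinarith
  have hc0 : c ≠ 0 := by simpa [norm_pos_iff] using hcpos
  set θ : 𝕜 := (‖c‖ : 𝕜)⁻¹ * c with hθ
  have hθnorm : ‖θ‖ = 1 := by
    rw [hθ, norm_mul, norm_inv, norm_ofReal, abs_of_pos hcpos]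
    field_simp
  have hθc : ‖θ - c‖ ≤ η := by
    have : θ - c = ((‖c‖ : 𝕜)⁻¹ - 1) * c := by ring
    rw [this, norm_mul]
    have h1 : ‖((‖c‖ : 𝕜)⁻¹ - 1)‖ = (‖c‖)⁻¹ - 1 := by
      rw [show ((‖c‖ : 𝕜)⁻¹ - 1) = (((‖c‖⁻¹ - 1 : ℝ)) : 𝕜) by push_cast; ring]
      rw [norm_ofReal, abs_of_nonneg]
      rw [sub_nonneg]
      exact (one_le_inv₀ hcpos).2 hc1
    rw [h1]
    have : ((‖c‖)⁻¹ - 1) * ‖c‖ = 1 - ‖c‖ := by field_simp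
    rw [this]; linarith
  set P : H₁ →L[𝕜] H₁ := ContinuousLinearMap.id 𝕜 H₁ - (innerSL 𝕜 x).smulRight x with hPdef
  set Q : H₂ →L[𝕜] H₂ := ContinuousLinearMap.id 𝕜 H₂ - (innerSL 𝕜 y).smulRight y with hQdef
  have hP : ∀ u, P u = u - (⟪x, u⟫ : 𝕜) • x := by
    intro u; simp [hPdef]
  have hQ : ∀ v, Q v = v - (⟪y, v⟫ : 𝕜) • y := by
    intro v; simp [hQdef]
  have hxx : (⟪x, x⟫ : 𝕜) = 1 := by rw [inner_self_eq_norm_sq_to_K, hx]; simp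
  have hyy2 : (⟪y, y⟫ : 𝕜) = 1 := by rw [inner_self_eq_norm_sq_to_K, hy]; simp
  have hPorth : ∀ u, (⟪x, P u⟫ : 𝕜) = 0 := by
    intro u; rw [hP]; simp [inner_sub_right, inner_smul_right, hxx, hx]
  have hQorth : ∀ v, (⟪y, Q v⟫ : 𝕜) = 0 := by
    intro v; rw [hQ]; simp [inner_sub_right, inner_smul_right, hyy2, hy]
  have hPpyth : ∀ u, ‖u‖ ^ 2 = ‖(⟪x, u⟫ : 𝕜)‖ ^ 2 + ‖P u‖ ^ 2 := by
    intro u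
    have h := norm_add_sq_eq_norm_sq_add_norm_sq_of_inner_eq_zero ((⟪x, u⟫ : 𝕜) • x) (P u)
      (by rw [inner_smul_left]; simp [hPorth u])
    have hsum : (⟪x, u⟫ : 𝕜) • x + P u = u := by rw [hP]; abel
    rw [hsum] at h
    simpa [norm_smul, hx, sq] using h
  have hQpyth : ∀ v, ‖v‖ ^ 2 = ‖(⟪y, v⟫ : 𝕜)‖ ^ 2 + ‖Q v‖ ^ 2 := by
    intro v
    have h := norm_add_sq_eq_norm_sq_add_norm_sq_of_inner_eq_zero ((⟪y, v⟫ : 𝕜) • y) (Q v)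
      (by rw [inner_smul_left]; simp [hQorth v])
    have hsum : (⟪y, v⟫ : 𝕜) • y + Q v = v := by rw [hQ]; abel
    rw [hsum] at h
    simpa [norm_smul, hy, sq] using h
  have hPle : ∀ u, ‖P u‖ ≤ ‖u‖ := by
    intro u
    have := hPpyth u
    nlinarith [norm_nonneg (P u), norm_nonneg u, sq_nonneg ‖(⟪x, u⟫ : 𝕜)‖]
  have hQle : ∀ v, ‖Q v‖ ≤ ‖v‖ := by
    intro v
    have := hQpyth v
    nlinarith [norm_nonneg (Q v), norm_nonneg v, sq_nonneg ‖(⟪y, v⟫ : 𝕜)‖]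
  set A : H₁ →L[𝕜] H₂ →L[𝕜] 𝕜 :=
    ((B.comp P).flip.comp Q).flip + (innerSL 𝕜 x).smulRight (θ • innerSL 𝕜 y) with hAdef
  have hA : ∀ u v, A u v = B (P u) (Q v) + (⟪x, u⟫ : 𝕜) * (θ * (⟪y, v⟫ : 𝕜)) := by
    intro u v
    simp [hAdef, ContinuousLinearMap.smul_apply, smul_eq_mul]
  have hAxy : A x y = θ := by
    have hPx : P x = 0 := by rw [hP, hxx, one_smul, sub_self]
    rw [hA, hPx, hxx, hyy2]
    simp
  have hAle : ‖A‖ ≤ 1 := by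
    refine ContinuousLinearMap.opNorm_le_bound _ zero_le_one (fun u => ?_)
    rw [one_mul]
    refine ContinuousLinearMap.opNorm_le_bound _ (norm_nonneg u) (fun v => ?_)
    rw [hA]
    have h1 : ‖B (P u) (Q v) + (⟪x, u⟫ : 𝕜) * (θ * (⟪y, v⟫ : 𝕜))‖ ≤
        ‖P u‖ * ‖Q v‖ + ‖(⟪x, u⟫ : 𝕜)‖ * ‖(⟪y, v⟫ : 𝕜)‖ := by
      calc ‖B (P u) (Q v) + (⟪x, u⟫ : 𝕜) * (θ * (⟪y, v⟫ : 𝕜))‖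
          ≤ ‖B (P u) (Q v)‖ + ‖(⟪x, u⟫ : 𝕜) * (θ * (⟪y, v⟫ : 𝕜))‖ := norm_add_le _ _
        _ ≤ ‖P u‖ * ‖Q v‖ + ‖(⟪x, u⟫ : 𝕜)‖ * ‖(⟪y, v⟫ : 𝕜)‖ := by
            gcongr
            · have := B.le_opNorm₂ (P u) (Q v)
              rw [hB] at this; simpa using this
            · rw [norm_mul, norm_mul, hθnorm, one_mul]
    refine h1.trans ?_
    have h2 := hPpyth u
    have h3 := hQpyth v
    exact aux_cs (norm_nonneg _) (norm_nonneg _) (norm_nonneg _) (norm_nonneg _)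
      (norm_nonneg u) (norm_nonneg v) h2 h3
  have hAxy1 : ‖A x y‖ = 1 := by rw [hAxy, hθnorm]
  have hAnorm : ‖A‖ = 1 := by
    refine le_antisymm hAle ?_
    have := A.le_opNorm₂ x y
    rw [hAxy1, hx, hy] at this; simpa using this
  refine ⟨A, hAnorm, hAxy1, ?_⟩
  -- bound on the two functionals
  have hfbd : ∀ v, (⟪y, v⟫ : 𝕜) = 0 → ‖B x v‖ ≤ Real.sqrt (2 * η) * ‖v‖ := by
    intro v hv
    have hf1 : ‖B x‖ ≤ 1 := by
      have := B.le_opNorm x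
      rw [hB, hx] at this; simpa using this
    have h := aux_orth (B x) y v hf1 hy hv
    have hfy : 1 - η < ‖B x y‖ := hBxy
    have hfy1 : ‖B x y‖ ≤ 1 := by rw [← hc]; exact hc1
    have hstep : 1 - ‖B x y‖ ^ 2 ≤ 2 * η := by
      nlinarith [sq_nonneg (‖B x y‖ - (1 - η)), hη.le]
    have h2 : ‖B x v‖ ^ 2 ≤ (2 * η) * ‖v‖ ^ 2 := by
      have := mul_le_mul_of_nonneg_right hstep (sq_nonneg ‖v‖)
      linarith
    have h3 : ‖B x v‖ ≤ Real.sqrt (2 * η * ‖v‖ ^ 2) :=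
      Real.le_sqrt_of_sq_le h2
    rwa [Real.sqrt_mul (by positivity), Real.sqrt_sq (norm_nonneg v)] at h3
  have hgbd : ∀ u, (⟪x, u⟫ : 𝕜) = 0 → ‖B u y‖ ≤ Real.sqrt (2 * η) * ‖u‖ := by
    intro u hu
    have hf1 : ‖B.flip y‖ ≤ 1 := by
      refine ContinuousLinearMap.opNorm_le_bound _ zero_le_one (fun w => ?_)
      have := B.le_opNorm₂ w y
      rw [hB, hy] at this
      simpa [ContinuousLinearMap.flip_apply] using this
    have h := aux_orth (B.flip y) x u hf1 hx hu
    simp only [ContinuousLinearMap.flip_apply] at h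
    have hfy : 1 - η < ‖B x y‖ := hBxy
    have hfy1 : ‖B x y‖ ≤ 1 := by rw [← hc]; exact hc1
    have hstep : 1 - ‖B x y‖ ^ 2 ≤ 2 * η := by
      nlinarith [sq_nonneg (‖B x y‖ - (1 - η)), hη.le]
    have h2 : ‖B u y‖ ^ 2 ≤ (2 * η) * ‖u‖ ^ 2 := by
      have := mul_le_mul_of_nonneg_right hstep (sq_nonneg ‖u‖)
      linarith
    have h3 : ‖B u y‖ ≤ Real.sqrt (2 * η * ‖u‖ ^ 2) :=
      Real.le_sqrt_of_sq_le h2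
    rwa [Real.sqrt_mul (by positivity), Real.sqrt_sq (norm_nonneg u)] at h3
  have hABbd : ‖A - B‖ ≤ η + 2 * Real.sqrt (2 * η) := by
    have hK : (0:ℝ) ≤ η + 2 * Real.sqrt (2 * η) := by positivity
    refine ContinuousLinearMap.opNorm_le_bound _ hK (fun u => ?_)
    rw [mul_comm]
    refine ContinuousLinearMap.opNorm_le_bound _ (by positivity) (fun v => ?_)
    have hBuv : B u v = B (P u) (Q v) + (⟪y, v⟫ : 𝕜) * B (P u) y
        + (⟪x, u⟫ : 𝕜) * B x (Q v) + (⟪x, u⟫ : 𝕜) * ((⟪y, v⟫ : 𝕜) * c) := by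
      have hu : u = P u + (⟪x, u⟫ : 𝕜) • x := by rw [hP]; abel
      have hv : v = Q v + (⟪y, v⟫ : 𝕜) • y := by rw [hQ]; abel
      conv_lhs => rw [hu, hv]
      simp [map_add, ContinuousLinearMap.map_smul, ContinuousLinearMap.add_apply,
        ContinuousLinearMap.smul_apply, smul_eq_mul, hc]
      ring
    have hkey : (A - B) u v = (⟪x, u⟫ : 𝕜) * ((⟪y, v⟫ : 𝕜) * (θ - c))
        - (⟪y, v⟫ : 𝕜) * B (P u) y - (⟪x, u⟫ : 𝕜) * B x (Q v) := by
      simp only [ContinuousLinearMap.sub_apply]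
      rw [hA, hBuv]
      ring
    rw [hkey]
    have hxu : ‖(⟪x, u⟫ : 𝕜)‖ ≤ ‖u‖ := by
      have := norm_inner_le_norm (𝕜 := 𝕜) x u
      rw [hx, one_mul] at this; exact this
    have hyv : ‖(⟪y, v⟫ : 𝕜)‖ ≤ ‖v‖ := by
      have := norm_inner_le_norm (𝕜 := 𝕜) y v
      rw [hy, one_mul] at this; exact this
    have t1 : ‖(⟪x, u⟫ : 𝕜) * ((⟪y, v⟫ : 𝕜) * (θ - c))‖ ≤ ‖u‖ * ‖v‖ * η := by
      rw [norm_mul, norm_mul]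
      calc ‖(⟪x, u⟫ : 𝕜)‖ * (‖(⟪y, v⟫ : 𝕜)‖ * ‖θ - c‖) ≤ ‖u‖ * (‖v‖ * η) := by
            gcongr
        _ = ‖u‖ * ‖v‖ * η := by ring
    have t2 : ‖(⟪y, v⟫ : 𝕜) * B (P u) y‖ ≤ ‖v‖ * (Real.sqrt (2 * η) * ‖u‖) := by
      rw [norm_mul]
      have := hgbd (P u) (hPorth u)
      calc ‖(⟪y, v⟫ : 𝕜)‖ * ‖B (P u) y‖ ≤ ‖v‖ * (Real.sqrt (2 * η) * ‖P u‖) := by gcongr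
        _ ≤ ‖v‖ * (Real.sqrt (2 * η) * ‖u‖) := by
            gcongr
            exact hPle u
    have t3 : ‖(⟪x, u⟫ : 𝕜) * B x (Q v)‖ ≤ ‖u‖ * (Real.sqrt (2 * η) * ‖v‖) := by
      rw [norm_mul]
      have := hfbd (Q v) (hQorth v)
      calc ‖(⟪x, u⟫ : 𝕜)‖ * ‖B x (Q v)‖ ≤ ‖u‖ * (Real.sqrt (2 * η) * ‖Q v‖) := by gcongr
        _ ≤ ‖u‖ * (Real.sqrt (2 * η) * ‖v‖) := by
            gcongr
            exact hQle v
    calc ‖(⟪x, u⟫ : 𝕜) * ((⟪y, v⟫ : 𝕜) * (θ - c))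
          - (⟪y, v⟫ : 𝕜) * B (P u) y - (⟪x, u⟫ : 𝕜) * B x (Q v)‖
        ≤ ‖(⟪x, u⟫ : 𝕜) * ((⟪y, v⟫ : 𝕜) * (θ - c))‖ + ‖(⟪y, v⟫ : 𝕜) * B (P u) y‖
          + ‖(⟪x, u⟫ : 𝕜) * B x (Q v)‖ := by
          refine (norm_sub_le _ _).trans ?_
          gcongr
          exact norm_sub_le _ _
      _ ≤ ‖u‖ * ‖v‖ * η + ‖v‖ * (Real.sqrt (2 * η) * ‖u‖)
          + ‖u‖ * (Real.sqrt (2 * η) * ‖v‖) := by gcongr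
      _ = ‖u‖ * (η + 2 * Real.sqrt (2 * η)) * ‖v‖ := by ring
  calc ‖A - B‖ ≤ η + 2 * Real.sqrt (2 * η) := hABbd
    _ < ε := by linarith
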